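/- Let $S_c$ be the inverse monoid of pairs $(\Delta, g)$ with $\Delta$ $c$-closed containing $1$ and $g$ (where $c$ is a $G$-invariant closure operator on subsets of a group $G$). For each pair $(\Delta, g)$, the element $(c(\{1, g\}), g)$ is the greatest element of the $\sigma$-class of $(\Delta, g)$, where $\sigma$ identifies pairs with equal second coordinate. Hence $S_c$ is $F$-inverse. -/

import Mathlib

open scoped Pointwise

variable {G : Type*} [Group G]

/-- The set of pairs `(Δ, g)` with `Δ` a `c`-closed subset of `G` containing `1` and `g`. -/
def SC (c : ClosureOperator (Set G)) : Type _ :=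
  {p : Set G × G // c p.1 = p.1 ∧ (1 : G) ∈ p.1 ∧ p.2 ∈ p.1}

/-- Multiplication `(Δ, g)(Ξ, h) = (c (Δ ∪ gΞ), gh)`. -/
def SCmul (c : ClosureOperator (Set G)) (s t : SC c) : SC c :=
  ⟨(c (s.1.1 ∪ s.1.2 • t.1.1), s.1.2 * t.1.2), by
    refine ⟨c.idempotent _, ?_, ?_⟩
    · exact c.le_closure _ (Or.inl s.2.2.1)
    · exact c.le_closure _ (Or.inr (by
        simpa [smul_eq_mul] using Set.smul_mem_smul_set (a := s.1.2) t.2.2.2))⟩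

/-- Inversion `(Δ, g)⁻¹ = (g⁻¹Δ, g⁻¹)` (needs `G`-invariance of `c`). -/
def SCinv (c : ClosureOperator (Set G))
    (hinv : ∀ (g : G) (A : Set G), c (g • A) = g • c A) (s : SC c) : SC c :=
  ⟨(s.1.2⁻¹ • s.1.1, s.1.2⁻¹), by
    refine ⟨by rw [hinv, s.2.1], ?_, ?_⟩
    · exact Set.mem_smul_set.mpr ⟨s.1.2, s.2.2.2, by simp⟩
    · exact Set.mem_smul_set.mpr ⟨1, s.2.2.1, by simp⟩⟩

/-- The identity element `(c {1}, 1)`. -/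
def SCone (c : ClosureOperator (Set G)) : SC c :=
  ⟨(c {1}, 1), c.idempotent _, c.le_closure _ rfl, c.le_closure _ rfl⟩

/-- The candidate maximum `(c {1, g}, g)` of the `σ`-class of `(Δ, g)`. -/
def SCm (c : ClosureOperator (Set G)) (s : SC c) : SC c :=
  ⟨(c {1, s.1.2}, s.1.2), c.idempotent _, c.le_closure _ (Or.inl rfl),
    c.le_closure _ (Or.inr rfl)⟩

/-! The natural partial order of an inverse monoid is `t ≤ m ↔ t = (t t⁻¹) m`. Here
`t t⁻¹ = (Δ, 1)`, and `(Δ, 1) (c {1, g}, g) = (c (Δ ∪ c {1, g}), g) = (Δ, g)` because the closed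
set `Δ` already contains `1` and `g`. -/

namespace SC

variable {c : ClosureOperator (Set G)}

lemma isClosed_fst (s : SC c) : c.IsClosed s.1.1 :=
  c.isClosed_iff.2 s.2.1

lemma closure_pair_subset_fst (s : SC c) : c {1, s.1.2} ⊆ s.1.1 :=
  s.isClosed_fst.closure_le_iff.2 (Set.insert_subset s.2.2.1 (Set.singleton_subset_iff.2 s.2.2.2))

lemma mul_inv_val (hinv : ∀ (g : G) (A : Set G), c (g • A) = g • c A) (t : SC c) :
    (SCmul c t (SCinv c hinv t)).1 = (t.1.1, 1) := by
  simp only [SCmul, SCinv, smul_inv_smul, Set.union_self, t.2.1, mul_inv_cancel]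

lemma mul_val_of_snd_eq_one {s t : SC c} (hs : s.1.2 = 1) (hts : t.1.1 ⊆ s.1.1) :
    (SCmul c s t).1 = (s.1.1, t.1.2) := by
  simp only [SCmul, hs, one_smul, one_mul, Set.union_eq_self_of_subset_right hts, s.2.1]

end SC

lemma SCm_fst_subset {c : ClosureOperator (Set G)} {s t : SC c} (h : t.1.2 = s.1.2) :
    (SCm c s).1.1 ⊆ t.1.1 := by
  show c {1, s.1.2} ⊆ t.1.1
  exact h ▸ t.closure_pair_subset_fst

/-- For each `(Δ, g) ∈ S_c`, the element `(c {1, g}, g)` is the greatest element of its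
`σ`-class (where `σ` identifies pairs with equal second coordinate, and the natural
partial order is `t ≤ m ↔ t = (t t⁻¹) m`).  Hence `S_c` is `F`-inverse. -/
theorem stmt12 (c : ClosureOperator (Set G))
    (hinv : ∀ (g : G) (A : Set G), c (g • A) = g • c A) :
    ∀ s : SC c, (SCm c s).1.2 = s.1.2 ∧
      ∀ t : SC c, t.1.2 = s.1.2 →
        SCmul c (SCmul c t (SCinv c hinv t)) (SCm c s) = t := by
  intro s
  refine ⟨rfl, fun t ht => Subtype.ext ?_⟩
  have hidem := SC.mul_inv_val hinv t
  rw [SC.mul_val_of_snd_eq_one (by rw [hidem]) (by rw [hidem]; exact SCm_fst_subset ht), hidem]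
  exact Prod.ext rfl ht.symm
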